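/- arXiv:1502.05990 — 4 statements merged into one kernel-verified Lean document; each statement's English description precedes it below -/
import Mathlib

section
/- Let w1 ≥ w2 ≥ w3 > 0 and f(p1,p2,p3) = p1*p2*p3*(w1*p1 + w2*p2 + w3*p3) on the simplex {pi ≥ 0, p1+p2+p3 = 1}. If (p1,p2,p3) maximizes f on the simplex, then 0 < p3 ≤ p2 ≤ p1 < 1. -/
/-!
A maximiser lies in the open simplex, since the value at the barycentre is positive. If two
coordinates were in the wrong order, replacing both by their mean would strictly increase the
product of the two (AM-GM) without decreasing the linear factor (the larger weight now sits on
the larger share), so the point was not a maximiser.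
-/

lemma mul_lt_sq_avg {a b : ℝ} (hab : a < b) : a * b < ((a + b) / 2) * ((a + b) / 2) := by
  nlinarith [sq_pos_of_pos (sub_pos.2 hab)]

lemma add_mul_le_add_mul_avg {L u v a b : ℝ} (hab : a ≤ b) (hvu : v ≤ u) :
    L + u * a + v * b ≤ L + u * ((a + b) / 2) + v * ((a + b) / 2) := by
  nlinarith [mul_nonneg (sub_nonneg.2 hvu) (sub_nonneg.2 hab)]

lemma mul_mul_mul_lt_of_avg {c L u v a b : ℝ} (hc : 0 < c) (ha : 0 ≤ a) (hab : a < b)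
    (hvu : v ≤ u) (hL : 0 < L + u * a + v * b) :
    c * a * b * (L + u * a + v * b)
      < c * ((a + b) / 2) * ((a + b) / 2) * (L + u * ((a + b) / 2) + v * ((a + b) / 2)) := by
  set m := (a + b) / 2
  have hlin := add_mul_le_add_mul_avg (L := L) hab.le hvu
  calc c * a * b * (L + u * a + v * b)
      = c * (a * b) * (L + u * a + v * b) := by ring
    _ ≤ c * (a * b) * (L + u * m + v * m) := by
      have := mul_nonneg ha (ha.trans hab.le)
      gcongr
    _ < c * (m * m) * (L + u * m + v * m) :=
      mul_lt_mul_of_pos_right (mul_lt_mul_of_pos_left (mul_lt_sq_avg hab) hc) (hL.trans_le hlin)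
    _ = c * m * m * (L + u * m + v * m) := by ring

theorem stmt2 (w1 w2 w3 : ℝ) (hw3 : 0 < w3) (h32 : w3 ≤ w2) (h21 : w2 ≤ w1)
    (p1 p2 p3 : ℝ) (hp1 : 0 ≤ p1) (hp2 : 0 ≤ p2) (hp3 : 0 ≤ p3)
    (hsum : p1 + p2 + p3 = 1)
    (hmax : ∀ q1 q2 q3 : ℝ, 0 ≤ q1 → 0 ≤ q2 → 0 ≤ q3 → q1 + q2 + q3 = 1 →
      q1*q2*q3*(w1*q1 + w2*q2 + w3*q3) ≤ p1*p2*p3*(w1*p1 + w2*p2 + w3*p3)) :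
    0 < p3 ∧ p3 ≤ p2 ∧ p2 ≤ p1 ∧ p1 < 1 := by
  have hF : 0 < p1*p2*p3*(w1*p1 + w2*p2 + w3*p3) :=
    lt_of_lt_of_le (by nlinarith) (hmax (1/3) (1/3) (1/3) (by norm_num) (by norm_num) (by norm_num)
      (by norm_num))
  have hlin : 0 < w1*p1 + w2*p2 + w3*p3 := pos_of_mul_pos_right hF (by positivity)
  have hprod : 0 < p1*p2*p3 := pos_of_mul_pos_left hF hlin.le
  have hp3' : 0 < p3 := pos_of_mul_pos_right hprod (mul_nonneg hp1 hp2)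
  have hp1' : 0 < p1 := pos_of_mul_pos_left (pos_of_mul_pos_left hprod hp3) hp2
  have h23 : p3 ≤ p2 := by
    by_contra! h
    have hq := hmax p1 ((p2 + p3) / 2) ((p2 + p3) / 2) hp1 (by linarith) (by linarith) (by linarith)
    exact hq.not_gt (mul_mul_mul_lt_of_avg hp1' hp2 h h32 (by linarith))
  have h12 : p2 ≤ p1 := by
    by_contra! h
    have hq := hmax ((p1 + p2) / 2) ((p1 + p2) / 2) p3 (by linarith) (by linarith) hp3 (by linarith)
    have := mul_mul_mul_lt_of_avg (L := w3 * p3) hp3' hp1 h h21 (by linarith)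
    linarith
  exact ⟨hp3', h23, h12, by linarith⟩
end

section
/- Suppose 0 < w3 < w2 < w1. Define c0 = w3*(w2 - w3), c1 = 3*w1*w2 - w1*w3 - 4*w2*w3 + 2*w3^2, c2 = 2*w1^2 - 4*w1*w2 - w1*w3 + 3*w2*w3, c3 = w1*(w2 - w1). Then the cubic equation c0 + c1*y + c2*y^2 + c3*y^3 = 0 has exactly one real root y ≥ 1, and this root satisfies y > 1. -/
/-!
By Descartes' rule of signs the coefficient pattern `c0 > 0, c1 > 0, c3 < 0` forces a cubic to
have at most one positive root. Here the cubic takes the value `(w1 - w3)^2 > 0` at `y = 1` and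
tends to `-∞`, so that root exists and lies strictly beyond `1`.
-/

open Filter Polynomial

theorem tendsto_cubic_atTop_atBot {c0 c1 c2 c3 : ℝ} (hc3 : c3 < 0) :
    Tendsto (fun y : ℝ => c0 + c1*y + c2*y^2 + c3*y^3) atTop atBot := by
  have hP := (C c3 * X ^ 3 + C c2 * X ^ 2 + C c1 * X + C c0).tendsto_atBot_of_leadingCoeff_nonpos
    (by rw [degree_cubic hc3.ne]; norm_num) (by rw [leadingCoeff_cubic hc3.ne]; exact hc3.le)
  convert hP using 2 with y
  simp only [eval_add, eval_mul, eval_C, eval_pow, eval_X]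
  ring

theorem exists_cubic_root_gt {c0 c1 c2 c3 x : ℝ} (hc3 : c3 < 0)
    (hx : 0 < c0 + c1*x + c2*x^2 + c3*x^3) :
    ∃ y, x < y ∧ c0 + c1*y + c2*y^2 + c3*y^3 = 0 :=
  intermediate_value_Ioi' (by fun_prop) (tendsto_cubic_atTop_atBot hc3) hx

theorem cubic_root_unique_of_pos {c0 c1 c2 c3 a b : ℝ} (hc0 : 0 < c0) (hc1 : 0 < c1)
    (hc3 : c3 < 0) (ha : 0 < a) (hb : 0 < b)
    (hfa : c0 + c1*a + c2*a^2 + c3*a^3 = 0) (hfb : c0 + c1*b + c2*b^2 + c3*b^3 = 0) :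
    a = b := by
  by_contra hne
  have hsum : c1 + c2*(a+b) + c3*(a^2+a*b+b^2) = 0 := by
    have h : (a - b) * (c1 + c2*(a+b) + c3*(a^2+a*b+b^2)) = 0 := by
      linear_combination hfa - hfb
    exact (mul_eq_zero.1 h).resolve_left (sub_ne_zero.2 hne)
  -- Vieta-type relations: with `X = c2 + c3 (a + b)`, `c0 = a b X` makes `X > 0`,
  -- and then `c1 = -(a + b) X + c3 a b < 0`.
  have hab : 0 < a * b := mul_pos ha hb
  have hprod : c0 = a*b*(c2 + c3*(a+b)) := by linear_combination hfa - a * hsum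
  have hX : 0 < c2 + c3*(a+b) := pos_of_mul_pos_right (hprod ▸ hc0) hab.le
  have : c1 = -(a+b)*(c2 + c3*(a+b)) + c3*(a*b) := by linear_combination hsum
  linarith [mul_pos (add_pos ha hb) hX, mul_neg_of_neg_of_pos hc3 hab]

theorem stmt3 (w1 w2 w3 : ℝ) (hw3 : 0 < w3) (h32 : w3 < w2) (h21 : w2 < w1) :
    let c0 := w3*(w2 - w3)
    let c1 := 3*w1*w2 - w1*w3 - 4*w2*w3 + 2*w3^2
    let c2 := 2*w1^2 - 4*w1*w2 - w1*w3 + 3*w2*w3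
    let c3 := w1*(w2 - w1)
    (∃! y : ℝ, 1 ≤ y ∧ c0 + c1*y + c2*y^2 + c3*y^3 = 0) ∧
    (∀ y : ℝ, 1 ≤ y → c0 + c1*y + c2*y^2 + c3*y^3 = 0 → 1 < y) := by
  intro c0 c1 c2 c3
  have h21' := sub_pos.2 h21
  have h32' := sub_pos.2 h32
  have hc0 : 0 < c0 := mul_pos hw3 h32'
  have hc1 : 0 < c1 := by
    have : c1 = w3*(w2 - w3) + 2*w3*(w1 - w2) + 3*(w1 - w2)*(w2 - w3) + 3*(w2 - w3)^2 := by ring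
    rw [this]; positivity
  have hc3 : c3 < 0 := mul_neg_of_pos_of_neg (by linarith) (sub_neg.2 h21)
  have hf1 : 0 < c0 + c1*1 + c2*1^2 + c3*1^3 := by
    have : c0 + c1*1 + c2*1^2 + c3*1^3 = (w1 - w3)^2 := by ring
    rw [this]; exact pow_pos (by linarith) 2
  have hgt : ∀ y : ℝ, 1 ≤ y → c0 + c1*y + c2*y^2 + c3*y^3 = 0 → 1 < y := fun y hy hfy =>
    hy.lt_of_ne (by rintro rfl; exact hf1.ne' hfy)
  obtain ⟨y, hy, hfy⟩ := exists_cubic_root_gt hc3 hf1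
  refine ⟨⟨y, ⟨hy.le, hfy⟩, fun z ⟨hz, hfz⟩ => ?_⟩, hgt⟩
  exact cubic_root_unique_of_pos hc0 hc1 hc3 (by linarith) (by linarith) hfz hfy
end

section
/- Let w1 > w2 (both positive) and w3 = w2, and consider maximizing f(p1,p2,p3) = p1*p2*p3*(w1*p1 + w2*p2 + w3*p3) over the 2-simplex. Setting Δ1 = 2*w1 - 3*w2 + sqrt(4*w1^2 - 4*w1*w2 + 9*w2^2), the point p1* = Δ1/(4*w1 + Δ1), p2* = p3* = 2*w1/(4*w1 + Δ1) is a critical point of f on the simplex, i.e., the three partial derivatives of f are equal there. -/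
/-!
On the face `p2 = p3` with `w3 = w2` the last two partial derivatives agree by symmetry, and
equality of the first two reduces, after dividing by `p2`, to the homogeneous quadratic
`w1 p1² + (3 w2 - 2 w1) p1 p2 - 2 w2 p2² = 0`. Its positive root has `p1 / p2 = Δ1 / (2 w1)`,
since `(2 w1 - 3 w2)² + 8 w1 w2 = 4 w1² - 4 w1 w2 + 9 w2²`; normalising to the simplex gives
the stated point.
-/

theorem partials_eq_of_quadratic_eq_zero {R : Type*} [CommRing R] {w1 w2 p1 p2 : R}
    (h : w1*p1^2 + (3*w2 - 2*w1)*p1*p2 - 2*w2*p2^2 = 0) :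
    p2*p2*(2*w1*p1 + w2*p2 + w2*p2) = p1*p2*(w1*p1 + 2*w2*p2 + w2*p2) := by
  linear_combination -p2 * h

theorem quadratic_eq_zero_at_delta (w1 w2 : ℝ) :
    let Δ1 := 2*w1 - 3*w2 + Real.sqrt (4*w1^2 - 4*w1*w2 + 9*w2^2)
    w1*Δ1^2 + (3*w2 - 2*w1)*Δ1*(2*w1) - 2*w2*(2*w1)^2 = 0 := by
  have hdisc : Real.sqrt (4*w1^2 - 4*w1*w2 + 9*w2^2) ^ 2 = 4*w1^2 - 4*w1*w2 + 9*w2^2 :=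
    Real.sq_sqrt (by nlinarith [sq_nonneg (2*w1 - w2), sq_nonneg w2])
  linear_combination w1 * hdisc

theorem stmt6 (w1 w2 w3 : ℝ) (hw2 : 0 < w2) (h21 : w2 < w1) (h32 : w3 = w2) :
    let Δ1 := 2*w1 - 3*w2 + Real.sqrt (4*w1^2 - 4*w1*w2 + 9*w2^2)
    let p1 := Δ1 / (4*w1 + Δ1)
    let p2 := 2*w1 / (4*w1 + Δ1)
    let p3 := 2*w1 / (4*w1 + Δ1)
    p1 + p2 + p3 = 1 ∧
    p2*p3*(2*w1*p1 + w2*p2 + w3*p3) = p1*p3*(w1*p1 + 2*w2*p2 + w3*p3) ∧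
    p1*p3*(w1*p1 + 2*w2*p2 + w3*p3) = p1*p2*(w1*p1 + w2*p2 + 2*w3*p3) := by
  intro Δ1 p1 p2 p3
  subst w3
  have hD : 0 < 4*w1 + Δ1 := by
    simp only [Δ1]
    linarith [Real.sqrt_nonneg (4*w1^2 - 4*w1*w2 + 9*w2^2)]
  have hq : w1*p1^2 + (3*w2 - 2*w1)*p1*p2 - 2*w2*p2^2 = 0 := by
    linear_combination (4*w1 + Δ1)⁻¹ ^ 2 * quadratic_eq_zero_at_delta w1 w2
  refine ⟨?_, partials_eq_of_quadratic_eq_zero hq, by ring⟩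
  simp only [p1, p2, p3]
  field_simp [hD.ne']
  ring
end

section
/- Under the same setup (π_t > 0, g_s > 0, tridiagonal matrix A3 with diagonal u_t = g_t^2(1/π_t + 1/π_{t+1}) and off-diagonal -b_t = -g_{t-1}g_t/π_t), the matrix A3 is positive definite. -/
/-!
A3 factors as `Bᵀ D B`, where `D = diag(1/π_1, …, 1/π_J)` and `B` is the `J × (J-1)` weighted
difference matrix `(B x)_t = g_{t-1} x_{t-1} - g_t x_t`, so that
`xᵀ A3 x = ∑_t (g_{t-1} x_{t-1} - g_t x_t)² / π_t`. Since `B` is lower bidiagonal with the nonzero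
entries `-g_t` on its diagonal, it is injective, and `D` is positive definite.
-/

open Matrix

/-- With 0-based indices, row `r` and column `k` stand for the paper's `t = r + 1` and `s = k + 1`:
row `t` has `g_{t-1}` in column `t - 1` and `-g_t` in column `t`. -/
def weightedDifference {R : Type*} [CommRing R] (g : ℕ → R) (m n : ℕ) : Matrix (Fin m) (Fin n) R :=
  of fun r k => if (k : ℕ) + 1 = r then g r else if (k : ℕ) = r then -g (r + 1) else 0

namespace weightedDifference

variable {R : Type*} [CommRing R] {g : ℕ → R} {m n : ℕ}

theorem mulVec_injective [NoZeroDivisors R] (hnm : n ≤ m) (hg : ∀ k < n, g (k + 1) ≠ 0) :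
    Function.Injective (weightedDifference g m n).mulVec := by
  suffices h : ∀ x, weightedDifference g m n *ᵥ x = 0 → ∀ i, x i = 0 from
    fun x y hxy => sub_eq_zero.mp <| funext <| h _ (by rw [mulVec_sub, hxy, sub_self])
  intro x hx i
  induction i using WellFoundedLT.induction with
  | ind i ih =>
    have hrow := congrFun hx ⟨i, by omega⟩
    rw [mulVec, dotProduct, Finset.sum_eq_single i] at hrow
    · simpa [weightedDifference, hg i i.isLt] using hrow
    · intro k _ hki
      by_cases hk : (k : ℕ) + 1 = i
      · rw [ih k (by rw [Fin.lt_def]; omega), mul_zero]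
      · simp [weightedDifference, hk, Fin.val_ne_of_ne hki]
    · simp

theorem transpose_mul_diagonal_mul_apply (hnm : n < m) (d : ℕ → R) (i j : Fin n) :
    ((weightedDifference g m n)ᵀ * diagonal (fun r : Fin m => d r) *
        weightedDifference g m n) i j =
      if (i : ℕ) = j then g (i + 1) ^ 2 * (d i + d (i + 1))
      else if (i : ℕ) + 1 = j then -(g j * g (j + 1) * d j)
      else if (j : ℕ) + 1 = i then -(g i * g (i + 1) * d i)
      else 0 := by
  let b : ℕ → ℕ → R := fun r k => if k + 1 = r then g r else if k = r then -g (r + 1) else 0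
  have hsum : ((weightedDifference g m n)ᵀ * diagonal (fun r : Fin m => d r) *
      weightedDifference g m n) i j = ∑ r ∈ Finset.range m, b r i * d r * b r j := by
    rw [mul_apply]
    simp only [mul_diagonal, transpose_apply]
    exact Fin.sum_univ_eq_sum_range (fun r => b r i * d r * b r j) m
  rw [hsum, ← Finset.sum_subset (s₁ := ({(i : ℕ), (i : ℕ) + 1} : Finset ℕ))]
  · rw [Finset.sum_pair (by omega)]
    simp only [b]
    generalize (i : ℕ) = a, (j : ℕ) = c
    split_ifs <;> first | omega | (subst_vars; ring)
  · intro r hr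
    simp only [Finset.mem_insert, Finset.mem_singleton, Finset.mem_range] at hr ⊢
    omega
  · intro r _ hr
    simp only [Finset.mem_insert, Finset.mem_singleton] at hr
    simp only [b]
    rw [if_neg (by omega), if_neg (by omega), zero_mul, zero_mul]

end weightedDifference

theorem stmt12_general (J : ℕ) (hJ : 2 ≤ J) (pi g : ℕ → ℝ)
    (hpi : ∀ t, 1 ≤ t → t ≤ J → 0 < pi t)
    (hg : ∀ s, 1 ≤ s → s ≤ J - 1 → 0 < g s)
    (A3 : Matrix (Fin (J-1)) (Fin (J-1)) ℝ)
    (hA : ∀ i j : Fin (J-1), A3 i j =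
      if (i : ℕ) = (j : ℕ) then (g ((i : ℕ)+1))^2 * (1/pi ((i : ℕ)+1) + 1/pi ((i : ℕ)+2))
      else if (i : ℕ) + 1 = (j : ℕ) then -(g (j : ℕ) * g ((j : ℕ)+1) / pi ((j : ℕ)+1))
      else if (j : ℕ) + 1 = (i : ℕ) then -(g (i : ℕ) * g ((i : ℕ)+1) / pi ((i : ℕ)+1))
      else 0) :
    A3.PosDef := by
  have hJ1 : J - 1 < J := by omega
  set B := weightedDifference g J (J - 1)
  have hfact : A3 = Bᴴ * diagonal (fun r : Fin J => 1 / pi (r + 1)) * B := by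
    ext i j
    rw [hA, conjTranspose_eq_transpose_of_trivial,
      weightedDifference.transpose_mul_diagonal_mul_apply hJ1 (fun r => 1 / pi (r + 1))]
    simp only [mul_one_div]
  rw [hfact]
  refine PosDef.conjTranspose_mul_mul_same ?_ (weightedDifference.mulVec_injective hJ1.le ?_)
  · exact posDef_diagonal_iff.mpr fun r => one_div_pos.mpr (hpi _ (by omega) (by omega))
  · exact fun k hk => (hg (k + 1) (by omega) (by omega)).ne'

theorem stmt12 (J : ℕ) (hJ : 2 ≤ J) (pi g : ℕ → ℝ)
    (hpi : ∀ t, 1 ≤ t → t ≤ J → 0 < pi t)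
    (hg : ∀ s, 1 ≤ s → s ≤ J - 1 → 0 < g s)
    (hg0 : g 0 = 0) (hgJ : g J = 0)
    (A3 : Matrix (Fin (J-1)) (Fin (J-1)) ℝ)
    (hA : ∀ i j : Fin (J-1), A3 i j =
      if (i : ℕ) = (j : ℕ) then (g ((i : ℕ)+1))^2 * (1/pi ((i : ℕ)+1) + 1/pi ((i : ℕ)+2))
      else if (i : ℕ) + 1 = (j : ℕ) then -(g (j : ℕ) * g ((j : ℕ)+1) / pi ((j : ℕ)+1))
      else if (j : ℕ) + 1 = (i : ℕ) then -(g (i : ℕ) * g ((i : ℕ)+1) / pi ((i : ℕ)+1))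
      else 0) :
    A3.PosDef :=
  stmt12_general J hJ pi g hpi hg A3 hA
end
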